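/- arXiv:math/0307185 — 3 statements merged into one kernel-verified Lean document; each statement's English description precedes it below -/
import Mathlib

section
/- Let T be a linear track extension of a category A by a natural system D (so T is a groupoid-enriched category with T_ho = A and Aut_T(f) ≅ D_{[f]} naturally). Then T has finite lax products (the functors Hom(Y,X) → Hom(Y,X₁) × ⋯ × Hom(Y,X_n) induced by p_i : X → X_i are equivalences of groupoids for all Y) if and only if A has finite products and D is cartesian. -/
open CategoryTheory CategoryTheory.Limits Bicategory

universe w v u

/-- An object of the Baues–Wirsching category of factorizations of a category `C`. -/
structure FactObj (C : Type u) [Category.{v} C] : Type (max u v) where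
  {src : C}
  {tgt : C}
  hom : src ⟶ tgt

instance FactObj.category (C : Type u) [Category.{v} C] : Category (FactObj C) where
  Hom f g := { p : (g.src ⟶ f.src) × (f.tgt ⟶ g.tgt) // g.hom = p.1 ≫ f.hom ≫ p.2 }
  id f := ⟨(𝟙 _, 𝟙 _), by simp⟩
  comp {f g h} p q := ⟨(q.1.1 ≫ p.1.1, p.1.2 ≫ q.1.2), by simp [q.2, p.2]⟩
  id_comp p := by apply Subtype.ext; simp
  comp_id p := by apply Subtype.ext; simp
  assoc p q r := by apply Subtype.ext; simp

/-- A natural system of abelian groups on `C`. -/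
abbrev NaturalSystem (C : Type u) [Category.{v} C] : Type _ :=
  FactObj C ⥤ AddCommGrpCat.{v}

/-- `f ⟶ f ≫ b` in the factorization category. -/
def natPost {C : Type u} [Category.{v} C] {X Y Z : C} (f : X ⟶ Y) (b : Y ⟶ Z) :
    (FactObj.mk f) ⟶ (FactObj.mk (f ≫ b)) :=
  ⟨(𝟙 X, b), by simp⟩

/-- `f ⟶ a ≫ f` in the factorization category. -/
def natPre {C : Type u} [Category.{v} C] {X Y Z : C} (a : X ⟶ Y) (f : Y ⟶ Z) :
    (FactObj.mk f) ⟶ (FactObj.mk (a ≫ f)) :=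
  ⟨(a, 𝟙 Z), by simp⟩

/-- Cartesianness of a natural system. -/
def IsCartesianNS {C : Type u} [Category.{v} C] (D : NaturalSystem C) : Prop :=
  (∀ {X T : C} (_ : IsTerminal T) (f : X ⟶ T), Subsingleton (D.obj (FactObj.mk f))) ∧
  (∀ {X P X₁ X₂ : C} (p₁ : P ⟶ X₁) (p₂ : P ⟶ X₂)
      (_ : IsLimit (BinaryFan.mk p₁ p₂)) (f : X ⟶ P),
    Function.Bijective (fun a : D.obj (FactObj.mk f) =>
      ((D.map (natPost f p₁) a, D.map (natPost f p₂) a) :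
        D.obj (FactObj.mk (f ≫ p₁)) × D.obj (FactObj.mk (f ≫ p₂)))))

/-- A wrapper for a category structure on a given type of objects. -/
structure CatOn (C : Type u) : Type (max u (v + 1)) where
  cat : Category.{v} C

variable {C : Type u}

/-- Morphisms of the wrapped category structure. -/
abbrev AHom (catA : CatOn.{v} C) (X Y : C) : Type v :=
  @Quiver.Hom C (@CategoryStruct.toQuiver C (@Category.toCategoryStruct C catA.cat)) X Y

/-- Composition in the wrapped category structure. -/
abbrev aComp (catA : CatOn.{v} C) {X Y Z : C}
    (f : AHom catA X Y) (g : AHom catA Y Z) : AHom catA X Z :=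
  @CategoryStruct.comp C (@Category.toCategoryStruct C catA.cat) X Y Z f g

/-- The factorization category object determined by a morphism of the wrapped
category. -/
abbrev mkA (catA : CatOn.{v} C) {X Y : C} (φ : AHom catA X Y) :
    @FactObj C catA.cat :=
  @FactObj.mk C catA.cat X Y φ

/-- A track category: a strict 2-category in which all 2-cells are invertible. -/
class TrackGroupoid (B : Type u) [Bicategory.{w, v} B] : Prop where
  isIso : ∀ {X Y : B} {f g : X ⟶ Y} (η : f ⟶ g), IsIso η

attribute [instance] TrackGroupoid.isIso

/-- A linear track extension `0 → D → T₁ ⇉ T₀ → A → 0` of a category `A` (given by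
`catA`, on the same objects as the track category `T`, identified via `ι`) by a
natural system `D`:  a full quotient functor `q : T₀ → A` which is the identity on
objects, such that `q f = q g` iff `f ≃ g`, together with a compatible isomorphism
`τ : D_{q f} ≅ Aut(f)` of natural systems (compatible with whiskering, and carrying
the transport of `D` along tracks to conjugation). -/
structure TrackExtData (catA : CatOn.{v} C) (D : @NaturalSystem C catA.cat)
    (T : Type u) [Bicategory.{w, v} T] [Bicategory.Strict T] [TrackGroupoid T]
    (ι : T → C) where
  qmap : ∀ {X Y : T}, (X ⟶ Y) → AHom catA (ι X) (ι Y)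
  q_id : ∀ X : T, qmap (𝟙 X) =
    @CategoryStruct.id C (@Category.toCategoryStruct C catA.cat) (ι X)
  q_comp : ∀ {X Y Z : T} (f : X ⟶ Y) (g : Y ⟶ Z),
    qmap (f ≫ g) = aComp catA (qmap f) (qmap g)
  q_full : ∀ {X Y : T} (φ : AHom catA (ι X) (ι Y)), ∃ f : X ⟶ Y, qmap f = φ
  q_iff : ∀ {X Y : T} (f g : X ⟶ Y), qmap f = qmap g ↔ Nonempty (f ⟶ g)
  τ : ∀ {X Y : T} (f : X ⟶ Y), D.obj (mkA catA (qmap f)) ≃ (f ⟶ f)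
  τ_add : ∀ {X Y : T} (f : X ⟶ Y) (a b : D.obj (mkA catA (qmap f))),
    τ f (a + b) = τ f a ≫ τ f b
  τ_whiskL : ∀ {W X Y : T} (e : W ⟶ X) (f : X ⟶ Y) (a : D.obj (mkA catA (qmap f))),
    τ (e ≫ f) (D.map (eqToHom (by rw [q_comp]))
        (D.map (@natPre C catA.cat _ _ _ (qmap e) (qmap f)) a)) = e ◁ τ f a
  τ_whiskR : ∀ {X Y Z : T} (f : X ⟶ Y) (h : Y ⟶ Z) (a : D.obj (mkA catA (qmap f))),
    τ (f ≫ h) (D.map (eqToHom (by rw [q_comp]))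
        (D.map (@natPost C catA.cat _ _ _ (qmap f) (qmap h)) a)) = τ f a ▷ h
  τ_conj : ∀ {X Y : T} {f g : X ⟶ Y} (ξ : f ⟶ g) (a : D.obj (mkA catA (qmap f))),
    τ g (D.map (eqToHom (by rw [(q_iff f g).2 ⟨ξ⟩])) a) = inv ξ ≫ τ f a ≫ ξ

/-!
Write `π k = q (p k)`. Since `q f = q g` exactly when `f ≃ g`, the functor
`Hom(Y, P) → ∏ₖ Hom(Y, Xₖ)` is surjective on components iff every family in `A` factors
through `π`, and injective on components iff it does so uniquely. Through `τ`, its action on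
the automorphism group of `f` is the map `D_{q f} → ∏ₖ D_{q f ≫ π k}`; since the hom-sets
between isomorphic 1-cells are torsors under these groups, it is bijective on all hom-sets
iff that map is. So `T` has lax `n`-ary products iff `A` has `n`-ary products at which `D`
is cartesian. Finally `D` is cartesian at all finite products as soon as it is at the
terminal object and at binary products, by induction on `n` through
`X₀ × ⋯ × Xₙ = X₀ × (X₁ × ⋯ × Xₙ)`.
-/

namespace FactObj

variable {A : Type u} [Category.{v} A]

@[ext]
theorem hom_ext {x y : FactObj A} {p q : x ⟶ y} (h₁ : p.1.1 = q.1.1) (h₂ : p.1.2 = q.1.2) :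
    p = q :=
  Subtype.ext (Prod.ext h₁ h₂)

@[simp]
theorem comp_val {x y z : FactObj A} (p : x ⟶ y) (q : y ⟶ z) :
    (p ≫ q).1 = (q.1.1 ≫ p.1.1, p.1.2 ≫ q.1.2) :=
  rfl

@[simp]
theorem id_val (x : FactObj A) : (𝟙 x : x ⟶ x).1 = (𝟙 x.src, 𝟙 x.tgt) :=
  rfl

theorem eqToHom_mk {X Y : A} {φ ψ : X ⟶ Y} (h : φ = ψ) :
    eqToHom (congrArg FactObj.mk h) = ⟨(𝟙 X, 𝟙 Y), by simp [h]⟩ := by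
  subst h
  rfl

end FactObj

section NaturalSystem

variable {A : Type u} [Category.{v} A]

instance isIso_natPost {X Y Z : A} (f : X ⟶ Y) (b : Y ⟶ Z) [IsIso b] : IsIso (natPost f b) :=
  ⟨⟨(𝟙 X, inv b), by simp⟩, by ext <;> simp [natPost], by ext <;> simp [natPost]⟩

theorem natPost_comp_natPost {X Y Z W : A} (f : X ⟶ Y) (b : Y ⟶ Z) (c : Z ⟶ W) :
    natPost f b ≫ natPost (f ≫ b) c ≫ eqToHom (congrArg FactObj.mk (Category.assoc f b c)) =
      natPost f (b ≫ c) := by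
  rw [FactObj.eqToHom_mk (Category.assoc f b c)]
  ext <;> simp [natPost]

theorem NaturalSystem.map_natPost_comp (D : NaturalSystem A) {X Y Z W : A} (f : X ⟶ Y)
    {b : Y ⟶ Z} {c : Z ⟶ W} {g : Y ⟶ W} (hg : b ≫ c = g) (a : D.obj (.mk f)) :
    D.map (eqToHom (by rw [← hg, Category.assoc]))
      (D.map (natPost (f ≫ b) c) (D.map (natPost f b) a)) = D.map (natPost f g) a := by
  subst hg
  simp only [← ConcreteCategory.comp_apply, ← D.map_comp, Category.assoc, natPost_comp_natPost]

end NaturalSystem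

section CartesianFan

variable {A : Type u} [Category.{v} A]

def IsCartesianFan (D : NaturalSystem A) {J : Type*} {X : J → A} (c : Fan X) : Prop :=
  ∀ ⦃Y : A⦄ (φ : Y ⟶ c.pt),
    Function.Bijective fun (a : D.obj (.mk φ)) (j : J) => D.map (natPost φ (c.proj j)) a

variable {D : NaturalSystem A}

theorem IsCartesianFan.of_iso {J : Type*} {X : J → A} {c d : Fan X} (hc : IsCartesianFan D c)
    (e : d.pt ≅ c.pt) (w : ∀ j, e.hom ≫ c.proj j = d.proj j) : IsCartesianFan D d := by
  intro Y φ
  have hfactor : (fun (a : D.obj (.mk φ)) j => D.map (natPost φ (d.proj j)) a) =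
      (fun x j => D.map (eqToHom (by rw [← w j, Category.assoc])) (x j)) ∘
        (fun b j => D.map (natPost (φ ≫ e.hom) (c.proj j)) b) ∘ D.map (natPost φ e.hom) :=
    funext fun a => funext fun j => (D.map_natPost_comp φ (w j) a).symm
  rw [hfactor]
  exact (Function.Bijective.piMap fun j => ConcreteCategory.bijective_of_isIso _).comp
    ((hc _).comp (ConcreteCategory.bijective_of_isIso _))

theorem IsCartesianFan.of_isLimit {J : Type*} {X : J → A} {c d : Fan X}
    (hc : IsCartesianFan D c) (hlc : IsLimit c) (hld : IsLimit d) : IsCartesianFan D d :=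
  hc.of_iso (hld.conePointUniqueUpToIso hlc) fun j =>
    hld.conePointUniqueUpToIso_hom_comp hlc ⟨j⟩

theorem isCartesianFan_iff_of_isEmpty {J : Type*} [IsEmpty J] {X : J → A} (c : Fan X) :
    IsCartesianFan D c ↔ ∀ ⦃Y : A⦄ (φ : Y ⟶ c.pt), Subsingleton (D.obj (.mk φ)) := by
  refine forall₂_congr fun Y φ =>
    ⟨fun h => ⟨fun a b => h.1 (Subsingleton.elim _ _)⟩, fun _ => ?_⟩
  exact ⟨fun a b _ => Subsingleton.elim a b, fun x => ⟨0, Subsingleton.elim _ _⟩⟩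

theorem isCartesianFan_of_unique {J : Type*} [Unique J] {X : J → A} (c : Fan X)
    [IsIso (c.proj default)] : IsCartesianFan D c := by
  intro Y φ
  refine ((Equiv.piUnique _).comp_bijective _).1 ?_
  exact ConcreteCategory.bijective_of_isIso (D.map (natPost φ (c.proj default)))

theorem isCartesianFan_extendFan_iff {n : ℕ} {X : Fin (n + 1) → A}
    {c₁ : Fan fun i : Fin n => X i.succ} (h₁ : IsCartesianFan D c₁)
    (c₂ : BinaryFan (X 0) c₁.pt) :
    IsCartesianFan D (extendFan c₁ c₂) ↔ ∀ ⦃Y : A⦄ (φ : Y ⟶ c₂.pt), Function.Bijective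
      fun a : D.obj (.mk φ) => (D.map (natPost φ c₂.fst) a, D.map (natPost φ c₂.snd) a) := by
  refine forall₂_congr fun Y φ => ?_
  let tail := fun (x : D.obj (.mk (φ ≫ c₂.snd))) (i : Fin n) =>
    D.map (eqToHom (show FactObj.mk ((φ ≫ c₂.snd) ≫ c₁.proj i) =
      .mk (φ ≫ (extendFan c₁ c₂).proj i.succ) from congrArg _ (Category.assoc _ _ _)))
      (D.map (natPost (φ ≫ c₂.snd) (c₁.proj i)) x)
  have htail : Function.Bijective tail :=
    (Function.Bijective.piMap fun i => ConcreteCategory.bijective_of_isIso _).comp (h₁ _)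
  have hfactor :
      (fun (a : D.obj (.mk φ)) k => D.map (natPost φ ((extendFan c₁ c₂).proj k)) a) =
        Fin.consEquiv _ ∘ Prod.map id tail ∘
          fun a => (D.map (natPost φ c₂.fst) a, D.map (natPost φ c₂.snd) a) := by
    funext a k
    cases k using Fin.cases with
    | zero => rfl
    | succ i => exact (D.map_natPost_comp φ rfl a).symm
  exact (congrArg Function.Bijective hfactor).to_iff.trans
    (((Fin.consEquiv _).bijective.comp (Function.bijective_id.prodMap htail)).of_comp_iff' _)

theorem IsCartesianNS.isCartesianFan [HasFiniteProducts A] (hD : IsCartesianNS D) :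
    ∀ {n : ℕ} {X : Fin n → A} (c : Fan X), IsLimit c → IsCartesianFan D c
  | 0, _, c, hc => (isCartesianFan_iff_of_isEmpty c).2 fun _ =>
      hD.1 (isLimitEquivIsTerminalOfIsEmpty A c hc)
  | _ + 1, X, c, hc => by
    have h₁ := hD.isCartesianFan _ (productIsProduct fun i => X i.succ)
    have hext := (isCartesianFan_extendFan_iff h₁ (BinaryFan.mk prod.fst prod.snd)).2
      fun _ => hD.2 _ _ (prodIsProd _ _)
    exact hext.of_isLimit (extendFanIsLimit X (productIsProduct _) (prodIsProd _ _)) hc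

theorem hasFiniteProducts_and_isCartesianNS_iff (D : NaturalSystem A) :
    HasFiniteProducts A ∧ IsCartesianNS D ↔ ∀ (n : ℕ) (X : Fin n → A), ∃ (P : A)
      (π : ∀ k, P ⟶ X k), Nonempty (IsLimit (Fan.mk P π)) ∧ IsCartesianFan D (Fan.mk P π) := by
  constructor
  · rintro ⟨_, hD⟩ n X
    exact ⟨_, Pi.π X, ⟨productIsProduct X⟩, hD.isCartesianFan _ (productIsProduct X)⟩
  · intro H
    have hcart : ∀ {n : ℕ} {X : Fin n → A} (c : Fan X), IsLimit c → IsCartesianFan D c := by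
      intro n X c hc
      obtain ⟨P, π, ⟨hπ⟩, hπD⟩ := H n X
      exact hπD.of_isLimit hπ hc
    refine ⟨⟨fun n => ⟨fun F => ?_⟩⟩, fun hT f => ?_, @fun Y P X₁ X₂ p₁ p₂ hp f => ?_⟩
    · obtain ⟨P, π, ⟨hπ⟩, -⟩ := H n (F.obj ∘ Discrete.mk)
      have : HasLimit (Discrete.functor (F.obj ∘ Discrete.mk)) := HasLimit.mk ⟨_, hπ⟩
      exact hasLimit_of_iso Discrete.natIsoFunctor.symm
    · have hc := (isLimitEquivIsTerminalOfIsEmpty A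
        (Fan.mk (f := (Fin.elim0 : Fin 0 → A)) _ fun k => k.elim0)).symm hT
      exact (isCartesianFan_iff_of_isEmpty _).1 (hcart _ hc) f
    -- `P` is also the product of `X₁` and the one-factor product `X₂`.
    · let X : Fin 2 → A := Fin.cons X₁ fun _ => X₂
      let c₁ := limitConeOfUnique fun i : Fin 1 => X i.succ
      have : IsIso (Fan.proj c₁.cone default) := by
        dsimp [c₁, Fan.proj, limitConeOfUnique]
        infer_instance
      have hext := hcart _ (extendFanIsLimit X c₁.isLimit hp)
      exact (isCartesianFan_extendFan_iff (isCartesianFan_of_unique c₁.cone) _).1 hext f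

end CartesianFan

theorem nonempty_isLimit_fan_mk_iff {A : Type u} [Category.{v} A] {J : Type*} {X : J → A}
    {P : A} (π : ∀ j, P ⟶ X j) : Nonempty (IsLimit (Fan.mk P π)) ↔
      ∀ (Y : A) (fs : ∀ j, Y ⟶ X j), ∃! f : Y ⟶ P, ∀ j, f ≫ π j = fs j := by
  refine ⟨fun ⟨hc⟩ Y fs => ⟨Fan.IsLimit.lift hc fs, Fan.IsLimit.fac hc fs, fun f hf => ?_⟩,
    fun h => ⟨Fan.IsLimit.mk _ (fun s => (h s.pt s.proj).choose)
      (fun s => (h s.pt s.proj).choose_spec.1)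
      (fun s m hm => (h s.pt s.proj).choose_spec.2 m hm)⟩⟩
  exact Fan.IsLimit.hom_ext hc _ _ fun j => (hf j).trans (Fan.IsLimit.fac hc fs j).symm

section LaxProduct

variable {B : Type*} [Bicategory B]

def IsLaxProduct {J : Type*} {X : J → B} {P : B} (p : ∀ j, P ⟶ X j) : Prop :=
  ∀ Y : B, (∀ fs : ∀ j, Y ⟶ X j, ∃ f : Y ⟶ P, ∀ j, Nonempty (f ≫ p j ⟶ fs j)) ∧
    ∀ f g : Y ⟶ P, Function.Bijective fun η : f ⟶ g => fun j => η ▷ p j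

variable {J : Type*} {X : J → B} {Y P : B}

theorem bijective_whiskerRight_iff_of_iso {f g : Y ⟶ P} (ξ : f ≅ g) (p : ∀ j, P ⟶ X j) :
    (Function.Bijective fun η : f ⟶ g => fun j => η ▷ p j) ↔
      Function.Bijective fun η : f ⟶ f => fun j => η ▷ p j := by
  have hfactor : (fun η : f ⟶ g => fun j => η ▷ p j) =
      Equiv.piCongrRight (fun j => (Iso.refl _).homCongr (whiskerRightIso ξ (p j))) ∘
        (fun η : f ⟶ f => fun j => η ▷ p j) ∘ (Iso.refl f).homCongr ξ.symm := by
    funext η j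
    simp [← Bicategory.comp_whiskerRight]
  rw [hfactor, Equiv.comp_bijective, Equiv.bijective_comp]

theorem bijective_whiskerRight_of_aut [TrackGroupoid B] {f g : Y ⟶ P} (p : ∀ j, P ⟶ X j)
    (hdetect : (∀ j, Nonempty (f ≫ p j ⟶ g ≫ p j)) → Nonempty (f ⟶ g))
    (haut : Function.Bijective fun η : f ⟶ f => fun j => η ▷ p j) :
    Function.Bijective fun η : f ⟶ g => fun j => η ▷ p j := by
  by_cases h : ∀ j, Nonempty (f ≫ p j ⟶ g ≫ p j)
  · obtain ⟨ξ⟩ := hdetect h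
    exact (bijective_whiskerRight_iff_of_iso (asIso ξ) p).2 haut
  · obtain ⟨j, hj⟩ := not_forall.1 h
    exact ⟨fun η => (hj ⟨η ▷ p j⟩).elim, fun x => (hj ⟨x j⟩).elim⟩

end LaxProduct

namespace TrackExtData

/- The category structure on `A` is an implicit argument, read off from the extension: when
`T = A`, instance resolution would find the category of the strict bicategory instead. -/
variable {A : Type u} {instA : Category.{v} A} {D : NaturalSystem A}
  {T : Type u} [Bicategory.{w, v} T] [Bicategory.Strict T] [TrackGroupoid T] {ι : T → A}

theorem nonempty_comp_hom_iff (ext : TrackExtData ⟨instA⟩ D T ι) {X Y Z : T} (f : X ⟶ Y)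
    (h : Y ⟶ Z) (g : X ⟶ Z) :
    Nonempty (f ≫ h ⟶ g) ↔ ext.qmap f ≫ ext.qmap h = ext.qmap g := by
  rw [← ext.q_iff, ext.q_comp]

theorem bijective_whiskerRight_iff (ext : TrackExtData ⟨instA⟩ D T ι) {J : Type*} {X : J → T}
    {Y P : T} (p : ∀ j, P ⟶ X j) (f : Y ⟶ P) :
    (Function.Bijective fun η : f ⟶ f => fun j => η ▷ p j) ↔
      Function.Bijective fun (a : D.obj (.mk (ext.qmap f))) j =>
        D.map (natPost (ext.qmap f) (ext.qmap (p j))) a := by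
  have hfactor : (fun η : f ⟶ f => fun j => η ▷ p j) ∘ ext.τ f =
      (fun x j => ext.τ (f ≫ p j) (D.map (eqToHom (by rw [ext.q_comp])) (x j))) ∘
        fun a j => D.map (natPost (ext.qmap f) (ext.qmap (p j))) a :=
    funext fun a => funext fun j => (ext.τ_whiskR f (p j) a).symm
  rw [← Equiv.bijective_comp (ext.τ f), hfactor, Function.Bijective.of_comp_iff']
  exact .piMap fun j => (ext.τ _).bijective.comp (ConcreteCategory.bijective_of_isIso _)

theorem isLaxProduct_iff (ext : TrackExtData ⟨instA⟩ D T ι) (hι : Function.Surjective ι)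
    {J : Type*} {X : J → T} {P : T} (p : ∀ j, P ⟶ X j) :
    IsLaxProduct p ↔ Nonempty (IsLimit (Fan.mk (ι P) fun j => ext.qmap (p j))) ∧
      IsCartesianFan D (Fan.mk (ι P) fun j => ext.qmap (p j)) := by
  rw [nonempty_isLimit_fan_mk_iff]
  constructor
  · intro H
    refine ⟨fun Y fs => ?_, fun Y φ => ?_⟩
    · obtain ⟨Y, rfl⟩ := hι Y
      choose gs hgs using fun j => ext.q_full (fs j)
      obtain ⟨f, hf⟩ := (H Y).1 gs
      have hfac : ∀ j, ext.qmap f ≫ ext.qmap (p j) = fs j := fun j =>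
        ((ext.nonempty_comp_hom_iff _ _ _).1 (hf j)).trans (hgs j)
      refine ⟨ext.qmap f, hfac, fun φ hφ => ?_⟩
      obtain ⟨g, rfl⟩ := ext.q_full φ
      obtain ⟨η, -⟩ := ((H Y).2 g f).2 fun j =>
        ((ext.nonempty_comp_hom_iff _ _ _).2 (((hφ j).trans (hfac j).symm).trans
          (ext.q_comp _ _).symm)).some
      exact (ext.q_iff g f).2 ⟨η⟩
    · obtain ⟨Y, rfl⟩ := hι Y
      obtain ⟨f, rfl⟩ := ext.q_full φ
      exact (ext.bijective_whiskerRight_iff p f).1 ((H Y).2 f f)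
  · rintro ⟨hlim, hcart⟩ Y
    refine ⟨fun fs => ?_, fun f g => ?_⟩
    · obtain ⟨φ, hφ, -⟩ := hlim (ι Y) fun j => ext.qmap (fs j)
      obtain ⟨f, rfl⟩ := ext.q_full φ
      exact ⟨f, fun j => (ext.nonempty_comp_hom_iff _ _ _).2 (hφ j)⟩
    · refine bijective_whiskerRight_of_aut p (fun h => (ext.q_iff f g).1 ?_)
        ((ext.bijective_whiskerRight_iff p f).2 (hcart (ext.qmap f)))
      refine (hlim _ fun j => ext.qmap g ≫ ext.qmap (p j)).unique (fun j => ?_) fun _ => rfl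
      exact ((ext.nonempty_comp_hom_iff _ _ _).1 (h j)).trans (ext.q_comp _ _)

theorem exists_isLaxProduct_iff (ext : TrackExtData ⟨instA⟩ D T ι)
    (hι : Function.Surjective ι) {J : Type*} (X : J → T) :
    (∃ (P : T) (p : ∀ j, P ⟶ X j), IsLaxProduct p) ↔ ∃ (P : A) (π : ∀ j, P ⟶ ι (X j)),
      Nonempty (IsLimit (Fan.mk P π)) ∧ IsCartesianFan D (Fan.mk P π) := by
  refine ⟨fun ⟨P, p, h⟩ => ⟨_, _, (ext.isLaxProduct_iff hι p).1 h⟩, fun ⟨P, π, h⟩ => ?_⟩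
  obtain ⟨P, rfl⟩ := hι P
  choose p hp using fun j => ext.q_full (π j)
  obtain rfl : (fun j => ext.qmap (p j)) = π := funext hp
  exact ⟨P, p, (ext.isLaxProduct_iff hι p).2 h⟩

end TrackExtData

/-- **Track theories and cartesian natural systems.**  A linear track extension
`D → T₁ ⇉ T₀ → A` has finite lax products (i.e. is a track theory: the functors
`Hom(Y,X) → Hom(Y,X₁) × ⋯ × Hom(Y,X_n)` induced by suitable `pᵢ : X ⟶ Xᵢ` are
equivalences of groupoids) if and only if `A` has finite products and `D` is a
cartesian natural system. -/
theorem stmt12 [Bicategory.{w, v} C] [Bicategory.Strict C] [TrackGroupoid C]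
    (catA : CatOn.{v} C) (D : @NaturalSystem C catA.cat)
    (ext : TrackExtData catA D C (fun X => X)) :
    (∀ (n : ℕ) (Xs : Fin n → C), ∃ (P : C) (p : ∀ k, P ⟶ Xs k),
      ∀ Y : C,
        (∀ fs : ∀ k, Y ⟶ Xs k, ∃ f : Y ⟶ P, ∀ k, Nonempty (f ≫ p k ⟶ fs k)) ∧
        (∀ f g : Y ⟶ P,
          Function.Bijective (fun η : f ⟶ g => fun k => η ▷ p k))) ↔
      (@HasFiniteProducts C catA.cat ∧ @IsCartesianNS C catA.cat D) :=
  (forall₂_congr fun _ Xs => ext.exists_isLaxProduct_iff Function.surjective_id Xs).trans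
    (@hasFiniteProducts_and_isCartesianNS_iff C catA.cat D).symm
end

section
/- Any morphism in the category Tracks(C;D) of linear track extensions of a small category C by a natural system D is a weak equivalence of track categories: it is identity on objects and induces equivalences of all Hom-groupoids. -/
open CategoryTheory CategoryTheory.Limits Bicategory

universe w v u

variable {C : Type u}

/-- A type synonym used to carry a second track-category structure on the same
objects. -/
def Mirror (C : Type u) : Type u := C

/-- The identity-on-objects correspondence. -/
def toMirror : C → Mirror C := fun X => X

/-!
Both extensions identify the automorphism group of a 1-cell `f` with the same group
`D_{q f}`, and `F` respects these identifications, so `F` is bijective on automorphism groups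
of 1-cells. Both homotopy relations are the fibres of the same functor `q`, so `F` detects
and reflects homotopy of 1-cells. In a groupoid, a functor that is bijective on vertex
groups and reflects nonemptiness of hom-sets is bijective on all hom-sets.
-/

namespace CategoryTheory

theorem Functor.map_bijective_of_bijective_end {G H : Type*} [Category G] [Category H]
    [IsGroupoid G] (F : G ⥤ H) {x y : G}
    (hend : Function.Bijective (F.map : (x ⟶ x) → (F.obj x ⟶ F.obj x)))
    (hne : Nonempty (F.obj x ⟶ F.obj y) → Nonempty (x ⟶ y)) :
    Function.Bijective (F.map : (x ⟶ y) → (F.obj x ⟶ F.obj y)) := by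
  constructor
  · intro ξ η h
    have hloop : ξ ≫ CategoryTheory.inv η = η ≫ CategoryTheory.inv η :=
      hend.1 (by simp only [F.map_comp, h])
    exact (cancel_mono (CategoryTheory.inv η)).1 hloop
  · intro ζ
    obtain ⟨ξ₀⟩ := hne ⟨ζ⟩
    obtain ⟨α, hα⟩ := hend.2 (ζ ≫ CategoryTheory.inv (F.map ξ₀))
    exact ⟨α ≫ ξ₀, by simp [hα]⟩

instance Bicategory.isGroupoid_hom {B : Type*} [Bicategory B] [TrackGroupoid B]
    (X Y : B) : IsGroupoid (X ⟶ Y) :=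
  ⟨fun _ => inferInstance⟩

def Bicategory.homFunctor {B B' : Type*} [Bicategory B] [Bicategory B'] (obj : B → B')
    (F₁ : ∀ {X Y : B}, (X ⟶ Y) → (obj X ⟶ obj Y))
    (F₂ : ∀ {X Y : B} {f g : X ⟶ Y}, (f ⟶ g) → (F₁ f ⟶ F₁ g))
    (map_id : ∀ {X Y : B} (f : X ⟶ Y), F₂ (𝟙 f) = 𝟙 (F₁ f))
    (map_comp : ∀ {X Y : B} {f g h : X ⟶ Y} (ξ : f ⟶ g) (η : g ⟶ h),
      F₂ (ξ ≫ η) = F₂ ξ ≫ F₂ η) (X Y : B) :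
    (X ⟶ Y) ⥤ (obj X ⟶ obj Y) where
  obj := F₁
  map := F₂
  map_id := map_id
  map_comp := map_comp

end CategoryTheory

/-- **Morphisms of linear track extensions are weak equivalences.**
Let `T` and `T'` be linear track extensions of a small category `A` by a natural
system `D`, and let `F` be a morphism of linear track extensions: a track functor
(given by `F₁` on 1-cells and `F₂` on tracks) which is the identity on objects and
compatible with the structure functors `q`, `q'` and with `τ`, `τ'`.  Then `F` is a
weak equivalence: it is (trivially) surjective on objects, every 1-cell of `T'` is
homotopic to one in the image of `F₁`, and `F₂` is bijective on tracks; that is, the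
induced functors of hom-groupoids are equivalences. -/
theorem stmt14 [Bicategory.{w, v} C] [Bicategory.Strict C] [TrackGroupoid C]
    [Bicategory.{w, v} (Mirror C)] [Bicategory.Strict (Mirror C)]
    [TrackGroupoid (Mirror C)]
    (catA : CatOn.{v} C) (D : @NaturalSystem C catA.cat)
    (ext : TrackExtData catA D C (fun X => X))
    (ext' : TrackExtData catA D (Mirror C) (fun X => (X : C)))
    (F₁ : ∀ {X Y : C}, (X ⟶ Y) → (toMirror X ⟶ toMirror Y))
    (F₂ : ∀ {X Y : C} {f g : X ⟶ Y}, (f ⟶ g) → (F₁ f ⟶ F₁ g))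
    (hF_id2 : ∀ {X Y : C} (f : X ⟶ Y), F₂ (𝟙 f) = 𝟙 (F₁ f))
    (hF_comp2 : ∀ {X Y : C} {f g h : X ⟶ Y} (ξ : f ⟶ g) (η : g ⟶ h),
      F₂ (ξ ≫ η) = F₂ ξ ≫ F₂ η)
    (hFq : ∀ {X Y : C} (f : X ⟶ Y), ext'.qmap (F₁ f) = ext.qmap f)
    (hFτ : ∀ {X Y : C} (f : X ⟶ Y) (a : D.obj (mkA catA (ext.qmap f))),
      F₂ (ext.τ f a) = ext'.τ (F₁ f) (D.map (eqToHom (by rw [hFq f]; rfl)) a)) :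
    (∀ X' : Mirror C, ∃ X : C, toMirror X = X') ∧
    (∀ (X Y : C) (f' : toMirror X ⟶ toMirror Y),
      ∃ f : X ⟶ Y, Nonempty (F₁ f ⟶ f')) ∧
    (∀ (X Y : C) (f g : X ⟶ Y),
      Function.Bijective (fun ξ : f ⟶ g => F₂ ξ)) := by
  refine ⟨fun X' => ⟨X', rfl⟩, fun X Y f' => ?_, fun X Y f g => ?_⟩
  · obtain ⟨f, hf⟩ := ext.q_full (ext'.qmap f')
    exact ⟨f, (ext'.q_iff (F₁ f) f').1 ((hFq f).trans hf)⟩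
  · have hend : Function.Bijective (fun α : f ⟶ f => F₂ α) := by
      have hsq : (fun α : f ⟶ f => F₂ α) ∘ ext.τ f =
          ext'.τ (F₁ f) ∘ ConcreteCategory.hom (D.map (eqToHom (by rw [hFq f]; rfl))) :=
        funext (hFτ f)
      rw [← Equiv.bijective_comp (ext.τ f), hsq, Equiv.comp_bijective]
      exact ConcreteCategory.bijective_of_isIso _
    have hne : Nonempty (F₁ f ⟶ F₁ g) → Nonempty (f ⟶ g) := fun h =>
      (ext.q_iff f g).1 ((hFq f).symm.trans (((ext'.q_iff _ _).2 h).trans (hFq g)))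
    exact Functor.map_bijective_of_bijective_end
      (Bicategory.homFunctor toMirror F₁ F₂ hF_id2 hF_comp2 X Y) hend hne
end

section
/- Let T be a track category (category enriched in groupoids) and q : T₀ → T_ho the quotient functor to the homotopy category. Then pullback q* along q induces a fully faithful functor from the category of natural systems on T_ho to the category of T-natural systems, whose essential image consists exactly of the inert T-natural systems (those (D,∇) with ∇_ε = id for every track ε : f ⇒ f). -/
open CategoryTheory CategoryTheory.Limits Bicategory

universe w v u

lemma natPost_eqToHom {D : Type u} [Category.{v} D] {x y z : D} {a a' : x ⟶ y}
    (h : a = a') (b : y ⟶ z) :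
    natPost a b ≫ eqToHom (by rw [h]) =
      (eqToHom (by rw [h]) : FactObj.mk a ⟶ FactObj.mk a') ≫ natPost a' b := by
  subst h; simp

lemma natPre_eqToHom {D : Type u} [Category.{v} D] {x y z : D} (a : x ⟶ y)
    {b b' : y ⟶ z} (h : b = b') :
    natPre a b ≫ eqToHom (by rw [h]) =
      (eqToHom (by rw [h]) : FactObj.mk b ⟶ FactObj.mk b') ≫ natPre a b' := by
  subst h; simp

lemma natPost_eqToHom' {D : Type u} [Category.{v} D] {x y z : D} (a : x ⟶ y)
    {b b' : y ⟶ z} (h : b = b') :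
    natPost a b ≫ eqToHom (by rw [h]) = natPost a b' := by
  subst h; simp

lemma natPre_eqToHom' {D : Type u} [Category.{v} D] {x y z : D} {a a' : x ⟶ y}
    (h : a = a') (b : y ⟶ z) :
    natPre a b ≫ eqToHom (by rw [h]) = natPre a' b := by
  subst h; simp

variable {C : Type u} [Bicategory.{w, v} C] [Bicategory.Strict C] [TrackGroupoid C]

/-- The homotopy relation on 1-cells: existence of a track. -/
def htpySetoid (X Y : C) : Setoid (X ⟶ Y) where
  r f g := Nonempty (f ⟶ g)
  iseqv := ⟨fun f => ⟨𝟙 f⟩, fun ⟨η⟩ => ⟨inv η⟩, fun ⟨η⟩ ⟨θ⟩ => ⟨η ≫ θ⟩⟩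

/-- The homotopy category of a track category. -/
structure Ho (C : Type u) where
  obj : C

instance : Category.{v} (Ho C) where
  Hom X Y := Quotient (htpySetoid X.obj Y.obj)
  id X := Quotient.mk _ (𝟙 X.obj)
  comp {X Y Z} := Quotient.map₂ (· ≫ ·)
    (fun {f f'} hf {g g'} hg => hf.elim fun η => hg.elim fun θ => ⟨η ▷ g ≫ f' ◁ θ⟩)
  id_comp f := Quotient.inductionOn f fun f => congrArg (Quotient.mk _) (Category.id_comp f)
  comp_id f := Quotient.inductionOn f fun f => congrArg (Quotient.mk _) (Category.comp_id f)
  assoc f g h := Quotient.inductionOn₃ f g h fun f g h =>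
    congrArg (Quotient.mk _) (Category.assoc f g h)

/-- The quotient functor `q : T₀ ⥤ T_ho`. -/
def hoQuotient : C ⥤ Ho C where
  obj X := ⟨X⟩
  map f := Quotient.mk _ f
  map_id _ := rfl
  map_comp _ _ := rfl

/-- The induced functor between factorization categories `F T₀ ⥤ F T_ho`. -/
def hoFact : FactObj C ⥤ FactObj (Ho C) where
  obj F := FactObj.mk ((hoQuotient (C := C)).map F.hom)
  map {F G} p := ⟨((hoQuotient (C := C)).map p.1.1, (hoQuotient (C := C)).map p.1.2), by
    exact congrArg (Quotient.mk (htpySetoid _ _)) p.2⟩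
  map_id _ := by apply Subtype.ext; rfl
  map_comp _ _ := by apply Subtype.ext; rfl

/-- A `T`-natural system on a track category `T`: a natural system `D` on `T₀`
together with transport isomorphisms `∇_ξ : D_f ⟶ D_g` along tracks `ξ : f ⇒ g`,
functorial in `ξ` and compatible with pre- and postcomposition (conditions
(i)–(iv)). -/
structure TNatSys (C : Type u) [Bicategory.{w, v} C] [Bicategory.Strict C]
    [TrackGroupoid C] where
  D : NaturalSystem C
  nabla : ∀ {X Y : C} {f g : X ⟶ Y}, (f ⟶ g) →
    (D.obj (FactObj.mk f) ⟶ D.obj (FactObj.mk g))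
  nabla_id : ∀ {X Y : C} (f : X ⟶ Y), nabla (𝟙 f) = 𝟙 _
  nabla_comp : ∀ {X Y : C} {f g h : X ⟶ Y} (ξ : f ⟶ g) (η : g ⟶ h),
    nabla (ξ ≫ η) = nabla ξ ≫ nabla η
  natural_post : ∀ {X Y Z : C} {g g₁ : X ⟶ Y} (ξ : g ⟶ g₁) (f : Y ⟶ Z),
    D.map (natPost g f) ≫ nabla (ξ ▷ f) = nabla ξ ≫ D.map (natPost g₁ f)
  natural_pre : ∀ {W X Y : C} (h : W ⟶ X) {g g₁ : X ⟶ Y} (ξ : g ⟶ g₁),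
    D.map (natPre h g) ≫ nabla (h ◁ ξ) = nabla ξ ≫ D.map (natPre h g₁)
  outer_post : ∀ {X Y Z : C} (g : X ⟶ Y) {f f₁ : Y ⟶ Z} (ξ : f ⟶ f₁),
    D.map (natPost g f) ≫ nabla (g ◁ ξ) = D.map (natPost g f₁)
  outer_pre : ∀ {W X Y : C} {h h₁ : W ⟶ X} (η : h ⟶ h₁) (g : X ⟶ Y),
    D.map (natPre h g) ≫ nabla (η ▷ g) = D.map (natPre h₁ g)

/-- Morphisms of `T`-natural systems. -/
@[ext]
structure TNatHom (P Q : TNatSys C) where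
  t : P.D ⟶ Q.D
  compat : ∀ {X Y : C} {f g : X ⟶ Y} (ξ : f ⟶ g),
    P.nabla ξ ≫ t.app (FactObj.mk g) = t.app (FactObj.mk f) ≫ Q.nabla ξ

/-- An inert `T`-natural system: transport along automorphism tracks is trivial. -/
def TNatSys.Inert (P : TNatSys C) : Prop :=
  ∀ {X Y : C} {f : X ⟶ Y} (ε' : f ⟶ f), P.nabla ε' = 𝟙 _

lemma hoMap_eq {X Y : C} {f g : X ⟶ Y} (ξ : f ⟶ g) :
    (hoQuotient (C := C)).map f = (hoQuotient (C := C)).map g :=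
  Quotient.sound ⟨ξ⟩

lemma hoFact_natPost {X Y Z : C} (g : X ⟶ Y) (f : Y ⟶ Z) :
    hoFact.map (natPost g f) =
      natPost ((hoQuotient (C := C)).map g) ((hoQuotient (C := C)).map f) := rfl

lemma hoFact_natPre {W X Y : C} (h : W ⟶ X) (g : X ⟶ Y) :
    hoFact.map (natPre h g) =
      natPre ((hoQuotient (C := C)).map h) ((hoQuotient (C := C)).map g) := rfl

lemma homotopyClassEq {X Y : C} {f g : X ⟶ Y} (ξ : f ⟶ g) :
    (FactObj.mk ((hoQuotient (C := C)).map f)) = FactObj.mk ((hoQuotient (C := C)).map g) :=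
  congrArg (fun t : ((⟨X⟩ : Ho C) ⟶ ⟨Y⟩) => FactObj.mk t) (Quotient.sound ⟨ξ⟩)

/-- The pullback of a natural system on the homotopy category to a `T`-natural
system, with transport given by the identification of homotopy classes. -/
def qstar (E : NaturalSystem (Ho C)) : TNatSys C where
  D := hoFact ⋙ E
  nabla ξ := E.map (eqToHom (homotopyClassEq ξ))
  nabla_id := by
    intro X Y f
    show E.map (eqToHom (homotopyClassEq (𝟙 f))) = 𝟙 _
    rw [show homotopyClassEq (𝟙 f) = rfl from rfl]
    simp
  nabla_comp := by
    intro X Y f g h ξ η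
    show E.map _ = E.map _ ≫ E.map _
    rw [← E.map_comp]
    congr 1
    exact (eqToHom_trans _ _).symm
  natural_post := by
    intro X Y Z g g₁ ξ f
    dsimp only [Functor.comp_map]
    rw [← E.map_comp, ← E.map_comp, hoFact_natPost, hoFact_natPost]
    exact congrArg E.map (natPost_eqToHom (hoMap_eq ξ) _)
  natural_pre := by
    intro W X Y h g g₁ ξ
    dsimp only [Functor.comp_map]
    rw [← E.map_comp, ← E.map_comp, hoFact_natPre, hoFact_natPre]
    exact congrArg E.map (natPre_eqToHom _ (hoMap_eq ξ))
  outer_post := by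
    intro X Y Z g f f₁ ξ
    dsimp only [Functor.comp_map]
    rw [← E.map_comp, hoFact_natPost, hoFact_natPost]
    exact congrArg E.map (natPost_eqToHom' _ (hoMap_eq ξ))
  outer_pre := by
    intro W X Y h h₁ η g
    dsimp only [Functor.comp_map]
    rw [← E.map_comp, hoFact_natPre, hoFact_natPre]
    exact congrArg E.map (natPre_eqToHom' (hoMap_eq η) _)

/-- The morphism of `T`-natural systems induced by a morphism of natural systems on
the homotopy category. -/
def qstarHom {E E' : NaturalSystem (Ho C)} (ψ : E ⟶ E') :
    TNatHom (qstar E) (qstar E') where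
  t := { app := fun F => ψ.app (hoFact.obj F),
         naturality := fun _ _ p => ψ.naturality (hoFact.map p) }
  compat ξ := ψ.naturality (eqToHom (homotopyClassEq ξ))

/-!
Every homotopy class has a representative, and every morphism of factorizations in `T_ho` lifts
to `T₀` once a representative of its source is fixed. For `q*E` the transports `∇` are
identities, so a morphism `q*E ⟶ q*E'` takes the same value on homotopic 1-cells and descends
to `E ⟶ E'`. For an inert `(D, ∇)` two tracks `f ⇒ g` differ by an automorphism track, so
`∇_ξ : D_f ⟶ D_g` depends only on `[f] = [g]`; transporting along these canonical isomorphisms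
turns `D` into a natural system on `T_ho`, and conditions (iii), (iv) say exactly that the
structure maps of `D` commute with them.
-/

namespace CategoryTheory.NatTrans

variable {A B D : Type*} [Category A] [Category B] [Category D] {L : A ⥤ B} {E E' : B ⥤ D}

lemma conj_eqToHom_eq (α : L ⋙ E ⟶ L ⋙ E') {a b : A} {G : B}
    (ha : L.obj a = G) (hb : L.obj b = G)
    (h : E.map (eqToHom (ha.trans hb.symm)) ≫ α.app b =
      α.app a ≫ E'.map (eqToHom (ha.trans hb.symm))) :
    E.map (eqToHom ha.symm) ≫ α.app a ≫ E'.map (eqToHom ha) =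
      E.map (eqToHom hb.symm) ≫ α.app b ≫ E'.map (eqToHom hb) := by
  subst ha
  simp [reassoc_of% h]

lemma whiskerLeft_injective (hL : ∀ G, ∃ a, L.obj a = G) :
    Function.Injective (Functor.whiskerLeft L : (E ⟶ E') → _) := by
  intro ψ ψ' h
  refine NatTrans.ext (funext fun G ↦ ?_)
  obtain ⟨a, rfl⟩ := hL G
  exact congrArg (fun α ↦ α.app a) h

section Descent

variable (hL : ∀ G, ∃ a, L.obj a = G) (α : L ⋙ E ⟶ L ⋙ E')

noncomputable def descApp (G : B) : E.obj G ⟶ E'.obj G :=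
  E.map (eqToHom (hL G).choose_spec.symm) ≫ α.app (hL G).choose ≫
    E'.map (eqToHom (hL G).choose_spec)

variable {hL α}
variable (hα : ∀ a b (h : L.obj a = L.obj b),
  E.map (eqToHom h) ≫ α.app b = α.app a ≫ E'.map (eqToHom h))
include hα

lemma descApp_eq {a : A} {G : B} (ha : L.obj a = G) :
    descApp hL α G = E.map (eqToHom ha.symm) ≫ α.app a ≫ E'.map (eqToHom ha) :=
  conj_eqToHom_eq α _ ha (hα _ _ _)

variable (hlift : ∀ a {H : B} (p : L.obj a ⟶ H),
  ∃ b, ∃ (u : a ⟶ b) (hb : L.obj b = H), p = L.map u ≫ eqToHom hb)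
include hlift

lemma descApp_naturality {G H : B} (p : G ⟶ H) :
    E.map p ≫ descApp hL α H = descApp hL α G ≫ E'.map p := by
  obtain ⟨a, rfl⟩ := hL G
  obtain ⟨b, u, hb, rfl⟩ := hlift a p
  rw [descApp_eq hα (rfl : L.obj a = _), descApp_eq hα hb]
  simp [reassoc_of% (α.naturality u).symm]

end Descent

lemma existsUnique_whiskerLeft_eq (hL : ∀ G, ∃ a, L.obj a = G)
    (hlift : ∀ a {H : B} (p : L.obj a ⟶ H),
      ∃ b, ∃ (u : a ⟶ b) (hb : L.obj b = H), p = L.map u ≫ eqToHom hb)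
    (α : L ⋙ E ⟶ L ⋙ E')
    (hα : ∀ a b (h : L.obj a = L.obj b),
      E.map (eqToHom h) ≫ α.app b = α.app a ≫ E'.map (eqToHom h)) :
    ∃! ψ : E ⟶ E', Functor.whiskerLeft L ψ = α := by
  let ψ : E ⟶ E' :=
    { app := descApp hL α, naturality := fun _ _ p ↦ descApp_naturality hα hlift p }
  have hψ : Functor.whiskerLeft L ψ = α :=
    NatTrans.ext (funext fun a ↦ (descApp_eq hα rfl).trans (by simp))
  exact ⟨ψ, hψ, fun ψ' hψ' ↦ whiskerLeft_injective hL (hψ'.trans hψ.symm)⟩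

end CategoryTheory.NatTrans

namespace FactObj

variable {D : Type*} [Category D]

lemma comp_fst {F G H : FactObj D} (u : F ⟶ G) (v : G ⟶ H) : (u ≫ v).1.1 = v.1.1 ≫ u.1.1 :=
  rfl

lemma comp_snd {F G H : FactObj D} (u : F ⟶ G) (v : G ⟶ H) : (u ≫ v).1.2 = u.1.2 ≫ v.1.2 :=
  rfl

lemma eqToHom_fst {F G : FactObj D} (h : F = G) :
    (eqToHom h).1.1 = eqToHom (congrArg src h).symm := by
  subst h; rfl

lemma eqToHom_snd {F G : FactObj D} (h : F = G) :
    (eqToHom h).1.2 = eqToHom (congrArg tgt h) := by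
  subst h; rfl

lemma hom_ext_s15 {F G : FactObj D} {u u' : F ⟶ G} (h₁ : u.1.1 = u'.1.1) (h₂ : u.1.2 = u'.1.2) :
    u = u' :=
  Subtype.ext (Prod.ext h₁ h₂)

def sandwich {X Y X' Y' : D} (f : X ⟶ Y) (a : X' ⟶ X) (b : Y ⟶ Y') :
    FactObj.mk f ⟶ FactObj.mk (a ≫ f ≫ b) :=
  ⟨(a, b), rfl⟩

lemma sandwich_eq_natPost_comp_natPre {X Y X' Y' : D} (f : X ⟶ Y) (a : X' ⟶ X) (b : Y ⟶ Y') :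
    sandwich f a b = natPost f b ≫ natPre a (f ≫ b) :=
  hom_ext_s15 (Category.comp_id a).symm (Category.comp_id b).symm

end FactObj

open FactObj (sandwich)

lemma hoQuotient_map_out {X Y : C} (x : (⟨X⟩ : Ho C) ⟶ ⟨Y⟩) :
    hoQuotient.map (Quotient.out x) = x :=
  Quotient.out_eq x

lemma hoFact_obj_mk {G : FactObj (Ho C)} {f : G.src.obj ⟶ G.tgt.obj}
    (hf : hoQuotient.map f = G.hom) : hoFact.obj (FactObj.mk f) = G :=
  congrArg FactObj.mk hf

lemma hoFact_obj_surjective (G : FactObj (Ho C)) : ∃ a, hoFact.obj a = G :=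
  ⟨_, hoFact_obj_mk (hoQuotient_map_out G.hom)⟩

lemma hoFact_obj_eq {a b : FactObj C} (h : hoFact.obj a = hoFact.obj b) :
    ∃ (X Y : C) (f g : X ⟶ Y), a = FactObj.mk f ∧ b = FactObj.mk g ∧ Nonempty (f ⟶ g) := by
  obtain @⟨X, Y, f⟩ := a
  obtain @⟨X', Y', g⟩ := b
  obtain ⟨hX, hY, hfg⟩ := FactObj.mk.inj h
  obtain rfl : X = X' := congrArg Ho.obj hX
  obtain rfl : Y = Y' := congrArg Ho.obj hY
  exact ⟨X, Y, f, g, rfl, rfl, Quotient.exact (eq_of_heq hfg)⟩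

lemma hoQuotient_map_sandwich_out {G H : FactObj (Ho C)} (p : G ⟶ H) {f : G.src.obj ⟶ G.tgt.obj}
    (hf : hoQuotient.map f = G.hom) :
    hoQuotient.map (Quotient.out p.1.1 ≫ f ≫ Quotient.out p.1.2) = H.hom :=
  (congrArg₂ (· ≫ hoQuotient.map f ≫ ·) (hoQuotient_map_out p.1.1)
    (hoQuotient_map_out p.1.2)).trans (by rw [hf]; exact p.2.symm)

lemma hoQuotient_map_sandwich_out_eq_map_out {G H : FactObj (Ho C)} (p : G ⟶ H) :
    hoQuotient.map (Quotient.out p.1.1 ≫ Quotient.out G.hom ≫ Quotient.out p.1.2) =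
      hoQuotient.map (Quotient.out H.hom) :=
  (hoQuotient_map_sandwich_out p (hoQuotient_map_out _)).trans (hoQuotient_map_out _).symm

lemma hoFact_map_lift (a : FactObj C) {H : FactObj (Ho C)} (p : hoFact.obj a ⟶ H) :
    ∃ b, ∃ (u : a ⟶ b) (hb : hoFact.obj b = H), p = hoFact.map u ≫ eqToHom hb :=
  ⟨_, sandwich a.hom (Quotient.out p.1.1) (Quotient.out p.1.2),
    hoFact_obj_mk (hoQuotient_map_sandwich_out p (f := a.hom) rfl),
    FactObj.hom_ext_s15
      (by
        rw [FactObj.comp_fst, FactObj.eqToHom_fst]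
        erw [eqToHom_refl, Category.id_comp]
        exact (hoQuotient_map_out _).symm)
      (by
        rw [FactObj.comp_snd, FactObj.eqToHom_snd]
        erw [eqToHom_refl, Category.comp_id]
        exact (hoQuotient_map_out _).symm)⟩

lemma qstarHom_eq_iff {E E' : NaturalSystem (Ho C)} (ψ : E ⟶ E')
    (Φ : TNatHom (qstar E) (qstar E')) :
    qstarHom ψ = Φ ↔ Functor.whiskerLeft hoFact ψ = Φ.t :=
  ⟨congrArg TNatHom.t, fun h ↦ TNatHom.ext h⟩

lemma existsUnique_qstarHom_eq {E E' : NaturalSystem (Ho C)} (Φ : TNatHom (qstar E) (qstar E')) :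
    ∃! ψ : E ⟶ E', qstarHom ψ = Φ := by
  refine (existsUnique_congr fun ψ ↦ qstarHom_eq_iff ψ Φ).mpr
    (NatTrans.existsUnique_whiskerLeft_eq hoFact_obj_surjective hoFact_map_lift Φ.t
      fun a b h ↦ ?_)
  obtain ⟨X, Y, f, g, rfl, rfl, ⟨ξ⟩⟩ := hoFact_obj_eq h
  exact Φ.compat ξ

lemma qstar_inert (E : NaturalSystem (Ho C)) : (qstar E).Inert := fun _ ↦
  (congrArg E.map (eqToHom_refl _ _)).trans (E.map_id _)

namespace TNatSys

variable (P : TNatSys C)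

noncomputable def transport {X Y : C} {f g : X ⟶ Y} (h : hoQuotient.map f = hoQuotient.map g) :
    P.D.obj (FactObj.mk f) ⟶ P.D.obj (FactObj.mk g) :=
  P.nabla (Quotient.exact h).some

/-- The track `a ≫ f ≫ b ⇒ a' ≫ g ≫ b'` is split into whiskerings, each of which is moved past
the structure maps by one of conditions (iii), (iv). -/
lemma map_sandwich_comp_nabla {X Y X' Y' : C} {f g : X ⟶ Y} (ξ : f ⟶ g) {a a' : X' ⟶ X}
    (α : a ⟶ a') {b b' : Y ⟶ Y'} (β : b ⟶ b') :
    P.D.map (sandwich f a b) ≫ P.nabla (α ▷ (f ≫ b) ≫ a' ◁ ξ ▷ b ≫ a' ◁ g ◁ β) =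
      P.nabla ξ ≫ P.D.map (sandwich g a' b') := by
  simp only [FactObj.sandwich_eq_natPost_comp_natPre, P.D.map_comp, P.nabla_comp,
    Category.assoc]
  rw [reassoc_of% P.outer_pre α (f ≫ b), reassoc_of% P.natural_pre a' (ξ ▷ b),
    P.natural_pre a' (g ◁ β), reassoc_of% P.natural_post ξ b, reassoc_of% P.outer_post g β]

variable {P}

namespace Inert

variable (hP : P.Inert)
include hP

lemma nabla_eq {X Y : C} {f g : X ⟶ Y} (ξ η : f ⟶ g) : P.nabla ξ = P.nabla η := by
  rw [← IsIso.hom_inv_id_assoc η ξ, P.nabla_comp, hP (inv η ≫ ξ), Category.comp_id]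

lemma transport_eq {X Y : C} {f g : X ⟶ Y} (h : hoQuotient.map f = hoQuotient.map g)
    (ξ : f ⟶ g) : P.transport h = P.nabla ξ :=
  hP.nabla_eq _ ξ

lemma transport_refl {X Y : C} {f : X ⟶ Y} (h : hoQuotient.map f = hoQuotient.map f) :
    P.transport h = 𝟙 _ := by
  rw [hP.transport_eq h (𝟙 f), P.nabla_id]

lemma transport_trans {X Y : C} {f g k : X ⟶ Y} (h : hoQuotient.map f = hoQuotient.map g)
    (h' : hoQuotient.map g = hoQuotient.map k) :
    P.transport h ≫ P.transport h' = P.transport (h.trans h') := by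
  obtain ⟨ξ⟩ := Quotient.exact h
  obtain ⟨η⟩ := Quotient.exact h'
  rw [hP.transport_eq h ξ, hP.transport_eq h' η, hP.transport_eq _ (ξ ≫ η), P.nabla_comp]

lemma transport_of_eq {X Y : C} {f g : X ⟶ Y} (e : f = g)
    (h : hoQuotient.map f = hoQuotient.map g) :
    P.transport h = P.D.map (eqToHom (congrArg FactObj.mk e)) := by
  subst e
  rw [hP.transport_refl, eqToHom_refl, P.D.map_id]

lemma isIso_transport {X Y : C} {f g : X ⟶ Y} (h : hoQuotient.map f = hoQuotient.map g) :
    IsIso (P.transport h) :=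
  ⟨P.transport h.symm, by rw [hP.transport_trans, hP.transport_refl],
    by rw [hP.transport_trans, hP.transport_refl]⟩

lemma map_comp_transport {X Y X' Y' : C} {f g : X ⟶ Y} (h : hoQuotient.map f = hoQuotient.map g)
    {f₁ g₁ : X' ⟶ Y'} (h₁ : hoQuotient.map f₁ = hoQuotient.map g₁)
    (u : FactObj.mk f ⟶ FactObj.mk f₁) (u' : FactObj.mk g ⟶ FactObj.mk g₁)
    (hu₁ : hoQuotient.map u.1.1 = hoQuotient.map u'.1.1)
    (hu₂ : hoQuotient.map u.1.2 = hoQuotient.map u'.1.2) :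
    P.D.map u ≫ P.transport h₁ = P.transport h ≫ P.D.map u' := by
  obtain ⟨⟨a, b⟩, hu⟩ := u
  obtain ⟨⟨a', b'⟩, hu'⟩ := u'
  dsimp only at a b a' b' hu hu'
  subst hu hu'
  obtain ⟨ξ⟩ := Quotient.exact h
  obtain ⟨α⟩ := Quotient.exact hu₁
  obtain ⟨β⟩ := Quotient.exact hu₂
  rw [hP.transport_eq h ξ, hP.transport_eq h₁ _]
  exact P.map_sandwich_comp_nabla ξ α β

lemma map_comp_transport_eq {X Y X' Y' : C} {f : X ⟶ Y} {f₁ f₂ k : X' ⟶ Y'}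
    (h₁ : hoQuotient.map f₁ = hoQuotient.map k) (h₂ : hoQuotient.map f₂ = hoQuotient.map k)
    (u : FactObj.mk f ⟶ FactObj.mk f₁) (u' : FactObj.mk f ⟶ FactObj.mk f₂)
    (hu₁ : hoQuotient.map u.1.1 = hoQuotient.map u'.1.1)
    (hu₂ : hoQuotient.map u.1.2 = hoQuotient.map u'.1.2) :
    P.D.map u ≫ P.transport h₁ = P.D.map u' ≫ P.transport h₂ := by
  rw [← hP.transport_trans (h₁.trans h₂.symm) h₂,
    reassoc_of% hP.map_comp_transport rfl _ u u' hu₁ hu₂, hP.transport_refl, Category.id_comp]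

noncomputable def descend : NaturalSystem (Ho C) where
  obj G := P.D.obj (FactObj.mk (Quotient.out G.hom))
  map {G H} p := P.D.map (sandwich _ (Quotient.out p.1.1) (Quotient.out p.1.2)) ≫
    P.transport (hoQuotient_map_sandwich_out_eq_map_out p)
  map_id G := by
    rw [hP.map_comp_transport_eq _ rfl _ (𝟙 _) (hoQuotient_map_out _) (hoQuotient_map_out _),
      P.D.map_id, hP.transport_refl, Category.id_comp]
  map_comp {G H K} p r := by
    have h := hoQuotient_map_sandwich_out_eq_map_out p
    have h_map_r := hP.map_comp_transport h
      (by simp only [Functor.map_comp, h] : hoQuotient.map (Quotient.out r.1.1 ≫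
        (Quotient.out p.1.1 ≫ Quotient.out G.hom ≫ Quotient.out p.1.2) ≫ Quotient.out r.1.2) = _)
      (sandwich _ (Quotient.out r.1.1) (Quotient.out r.1.2))
      (sandwich _ (Quotient.out r.1.1) (Quotient.out r.1.2)) rfl rfl
    simp only [Category.assoc]
    rw [← reassoc_of% h_map_r, ← Functor.map_comp_assoc, hP.transport_trans]
    exact hP.map_comp_transport_eq _ _ _ _
      ((hoQuotient_map_out _).trans
        (congrArg₂ (· ≫ ·) (hoQuotient_map_out r.1.1) (hoQuotient_map_out p.1.1)).symm)
      ((hoQuotient_map_out _).trans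
        (congrArg₂ (· ≫ ·) (hoQuotient_map_out p.1.2) (hoQuotient_map_out r.1.2)).symm)

noncomputable def qstarDescendHom : TNatHom (qstar hP.descend) P where
  t :=
    { app F := P.transport (hoQuotient_map_out (hoQuotient.map F.hom))
      naturality F G u := by
        change (P.D.map (sandwich _ _ _) ≫ P.transport _) ≫ P.transport _ =
          P.transport _ ≫ P.D.map u
        erw [Category.assoc, hP.transport_trans]
        exact hP.map_comp_transport _ _ _ u (hoQuotient_map_out _) (hoQuotient_map_out _) }
  compat {X Y f g} ξ := by
    have hfg : hoQuotient.map f = hoQuotient.map g := Quotient.sound ⟨ξ⟩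
    have e : Quotient.out (hoQuotient.map f) = Quotient.out (hoQuotient.map g) := congrArg _ hfg
    change hP.descend.map (eqToHom (congrArg FactObj.mk hfg)) ≫
        P.transport (hoQuotient_map_out (hoQuotient.map g)) =
      P.transport (hoQuotient_map_out (hoQuotient.map f)) ≫ P.nabla ξ
    rw [eqToHom_map, ← hP.transport_eq hfg ξ, hP.transport_trans]
    erw [← eqToHom_map P.D (congrArg FactObj.mk e), ← hP.transport_of_eq e (congrArg _ e),
      hP.transport_trans]
    rfl

lemma isIso_qstarDescendHom_t : IsIso hP.qstarDescendHom.t :=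
  have (F : FactObj C) : IsIso (hP.qstarDescendHom.t.app F) :=
    hP.isIso_transport (hoQuotient_map_out (hoQuotient.map F.hom))
  NatIso.isIso_of_isIso_app _

end Inert

end TNatSys

/-- **Natural systems on the homotopy category and inert `T`-natural systems.**
For a track category `T`, the pullback functor `q*` along the quotient functor
`q : T₀ → T_ho` is a fully faithful functor from natural systems on `T_ho` to
`T`-natural systems, whose essential image consists exactly of the inert
`T`-natural systems. -/
theorem stmt15 :
    (∀ (E E' : NaturalSystem (Ho C)) (Φ : TNatHom (qstar E) (qstar E')),
      ∃! ψ : E ⟶ E', qstarHom ψ = Φ) ∧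
    (∀ E : NaturalSystem (Ho C), (qstar E).Inert) ∧
    (∀ P : TNatSys C, P.Inert →
      ∃ (E : NaturalSystem (Ho C)) (Φ : TNatHom (qstar E) P), IsIso Φ.t) :=
  ⟨fun _ _ ↦ existsUnique_qstarHom_eq, qstar_inert,
    fun _ hP ↦ ⟨hP.descend, hP.qstarDescendHom, hP.isIso_qstarDescendHom_t⟩⟩
end
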